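/- Let Q₁,…,Q_{n−1} be matrices with orthonormal rows or columns appropriately (each ‖Qⱼ‖₂ = 1 and ‖Qⱼ‖_F ≤ √D), and Qₙ arbitrary with product C = Q₁⋯Qₙ satisfying ‖C‖_F = ‖Qₙ‖_F. If each Qⱼ is perturbed by δⱼ with ‖δⱼ‖_F ≤ ε‖Qⱼ‖_F, then the first-order relative error satisfies ‖Σⱼ Q₁⋯Q_{j−1} δⱼ Q_{j+1}⋯Qₙ‖_F / ‖C‖_F ≤ ε(1 + (n−1)√D). -/

import Mathlib

open Matrix BigOperators

noncomputable def frob {m n : Type*} [Fintype m] [Fintype n] (A : Matrix m n ℝ) : ℝ :=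
  Real.sqrt (∑ i, ∑ j, (A i j) ^ 2)

noncomputable def spec {m n : Type*} [Fintype m] [Fintype n] [DecidableEq n]
    (A : Matrix m n ℝ) : ℝ :=
  ‖LinearMap.toContinuousLinearMap (Matrix.toEuclideanLin A)‖

noncomputable def prodRange {d : ℕ} (A : ℕ → Matrix (Fin d) (Fin d) ℝ) (a l : ℕ) :
    Matrix (Fin d) (Fin d) ℝ :=
  ((List.range l).map fun i => A (a + i)).prod

/-!
Write `Lⱼ = Q₁⋯Qⱼ₋₁` and `Rⱼ = Qⱼ₊₁⋯Qₙ`. Since `‖XY‖_F ≤ ‖X‖₂‖Y‖_F` and `‖XY‖_F ≤ ‖X‖_F‖Y‖₂`,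
factors of spectral norm at most one can be dropped from a Frobenius norm. For `j < n` split
`Rⱼ = Pⱼ Qₙ`; then `‖Lⱼ δⱼ Pⱼ Qₙ‖_F ≤ ‖δⱼ‖_F ‖Qₙ‖_F ≤ ε √D ‖C‖_F`, while the last term is bounded
by `‖δₙ‖_F ≤ ε ‖Qₙ‖_F = ε ‖C‖_F`. The triangle inequality sums these `n` bounds.
-/

section Norms

variable {m n p q : Type*} [Fintype m] [Fintype n] [Fintype p] [Fintype q]

lemma frob_nonneg (A : Matrix m n ℝ) : 0 ≤ frob A :=
  Real.sqrt_nonneg _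

lemma frob_transpose (A : Matrix m n ℝ) : frob Aᵀ = frob A := by
  unfold frob
  rw [Finset.sum_comm]
  rfl

section Frobenius

attribute [local instance] Matrix.frobeniusNormedAddCommGroup

lemma frob_eq_frobenius_norm (A : Matrix m n ℝ) : frob A = ‖A‖ := by
  rw [frobenius_norm_def, frob, Real.sqrt_eq_rpow]
  congr 1
  refine Finset.sum_congr rfl fun i _ => Finset.sum_congr rfl fun j _ => ?_
  rw [Real.rpow_two, Real.norm_eq_abs, sq_abs]

lemma frob_sum_le {ι : Type*} (s : Finset ι) (f : ι → Matrix m n ℝ) :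
    frob (∑ j ∈ s, f j) ≤ ∑ j ∈ s, frob (f j) := by
  simp only [frob_eq_frobenius_norm]
  exact norm_sum_le s f

lemma frob_mul_le (A : Matrix m n ℝ) (B : Matrix n p ℝ) : frob (A * B) ≤ frob A * frob B := by
  simp only [frob_eq_frobenius_norm]
  exact frobenius_norm_mul A B

end Frobenius

section L2Operator

open scoped Matrix.Norms.L2Operator

lemma spec_eq_l2_opNorm [DecidableEq n] (A : Matrix m n ℝ) : spec A = ‖A‖ := rfl

lemma spec_nonneg [DecidableEq n] (A : Matrix m n ℝ) : 0 ≤ spec A :=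
  norm_nonneg _

lemma spec_mul_le [DecidableEq n] [DecidableEq p] (A : Matrix m n ℝ) (B : Matrix n p ℝ) :
    spec (A * B) ≤ spec A * spec B :=
  l2_opNorm_mul A B

lemma spec_one_le [DecidableEq n] : spec (1 : Matrix n n ℝ) ≤ 1 := by
  rw [spec_eq_l2_opNorm, cstar_norm_def, _root_.map_one]
  exact ContinuousLinearMap.norm_id_le

lemma spec_transpose [DecidableEq m] [DecidableEq n] (A : Matrix m n ℝ) :
    spec Aᵀ = spec A := by
  simpa only [spec_eq_l2_opNorm, conjTranspose_eq_transpose_of_trivial] using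
    l2_opNorm_conjTranspose A

lemma sum_sq_mulVec_le [DecidableEq n] (A : Matrix m n ℝ) (v : n → ℝ) :
    ∑ i, (A *ᵥ v) i ^ 2 ≤ spec A ^ 2 * ∑ j, v j ^ 2 := by
  have h := pow_le_pow_left₀ (norm_nonneg _) (l2_opNorm_mulVec A (WithLp.toLp 2 v)) 2
  rw [spec_eq_l2_opNorm]
  simpa [mul_pow, EuclideanSpace.norm_sq_eq] using h

end L2Operator

/-- Applied column by column, `‖A x‖₂ ≤ ‖A‖₂ ‖x‖₂` gives the mixed bound. -/
lemma frob_mul_le_spec_mul [DecidableEq n] (A : Matrix m n ℝ) (B : Matrix n p ℝ) :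
    frob (A * B) ≤ spec A * frob B := by
  have hsq : ∑ i, ∑ k, (A * B) i k ^ 2 ≤ spec A ^ 2 * ∑ j, ∑ k, B j k ^ 2 := by
    rw [Finset.sum_comm, Finset.sum_comm (γ := n), Finset.mul_sum]
    refine Finset.sum_le_sum fun k _ => ?_
    simpa [mul_apply, mulVec, dotProduct] using sum_sq_mulVec_le A (fun j => B j k)
  calc frob (A * B) ≤ √(spec A ^ 2 * ∑ j, ∑ k, B j k ^ 2) := Real.sqrt_le_sqrt hsq
    _ = spec A * frob B := by rw [Real.sqrt_mul (sq_nonneg _), Real.sqrt_sq (spec_nonneg A)]; rfl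

lemma frob_mul_le_mul_spec [DecidableEq m] [DecidableEq n] [DecidableEq p]
    (A : Matrix m n ℝ) (B : Matrix n p ℝ) : frob (A * B) ≤ frob A * spec B := by
  have h := frob_mul_le_spec_mul Bᵀ Aᵀ
  rwa [← transpose_mul, frob_transpose, frob_transpose, spec_transpose, mul_comm] at h

lemma frob_mul_mul_le_of_spec_le_one [DecidableEq m] [DecidableEq n] [DecidableEq p]
    [DecidableEq q] {L : Matrix m n ℝ} {R : Matrix p q ℝ} (hL : spec L ≤ 1) (hR : spec R ≤ 1)
    (X : Matrix n p ℝ) : frob (L * X * R) ≤ frob X :=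
  calc frob (L * X * R) ≤ frob (L * X) * spec R := frob_mul_le_mul_spec _ _
    _ ≤ frob (L * X) := mul_le_of_le_one_right (frob_nonneg _) hR
    _ ≤ spec L * frob X := frob_mul_le_spec_mul _ _
    _ ≤ frob X := mul_le_of_le_one_left (frob_nonneg _) hL

end Norms

section PartialProducts

variable {d : ℕ} (Q : ℕ → Matrix (Fin d) (Fin d) ℝ)

@[simp]
lemma prodRange_zero (a : ℕ) : prodRange Q a 0 = 1 := by
  simp [prodRange]

lemma prodRange_succ (a l : ℕ) : prodRange Q a (l + 1) = prodRange Q a l * Q (a + l) := by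
  simp [prodRange, List.range_succ]

lemma spec_prodRange_le_one {a l : ℕ} (h : ∀ i < l, spec (Q (a + i)) ≤ 1) :
    spec (prodRange Q a l) ≤ 1 := by
  induction l with
  | zero => simpa using spec_one_le
  | succ l ih =>
    rw [prodRange_succ]
    calc spec (prodRange Q a l * Q (a + l))
        ≤ spec (prodRange Q a l) * spec (Q (a + l)) := spec_mul_le _ _
      _ ≤ 1 := mul_le_one₀ (ih fun i hi => h i (by omega)) (spec_nonneg _) (h l (by omega))

variable {Q} {m : ℕ} (hQ : ∀ i < m, spec (Q i) ≤ 1)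
include hQ

lemma frob_prodRange_mul_last_le (X : Matrix (Fin d) (Fin d) ℝ) :
    frob (prodRange Q 0 m * X * prodRange Q (m + 1) 0) ≤ frob X :=
  frob_mul_mul_le_of_spec_le_one (spec_prodRange_le_one Q fun i hi => by simpa using hQ i hi)
    (by simpa using spec_one_le) X

lemma frob_prodRange_mul_le {j : ℕ} (hj : j < m) (X : Matrix (Fin d) (Fin d) ℝ) :
    frob (prodRange Q 0 j * X * prodRange Q (j + 1) (m - j)) ≤ frob X * frob (Q m) := by
  obtain ⟨k, rfl⟩ : ∃ k, m = j + 1 + k := ⟨m - (j + 1), by omega⟩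
  have hsplit : prodRange Q (j + 1) (j + 1 + k - j) = prodRange Q (j + 1) k * Q (j + 1 + k) := by
    rw [show j + 1 + k - j = k + 1 by omega, prodRange_succ]
  have hL : spec (prodRange Q 0 j) ≤ 1 :=
    spec_prodRange_le_one Q fun i hi => by simpa using hQ i (by omega)
  have hR : spec (prodRange Q (j + 1) k) ≤ 1 :=
    spec_prodRange_le_one Q fun i hi => hQ _ (by omega)
  rw [hsplit, ← mul_assoc]
  calc frob (prodRange Q 0 j * X * prodRange Q (j + 1) k * Q (j + 1 + k))
      ≤ frob (prodRange Q 0 j * X * prodRange Q (j + 1) k) * frob (Q (j + 1 + k)) :=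
        frob_mul_le _ _
    _ ≤ frob X * frob (Q (j + 1 + k)) :=
        mul_le_mul_of_nonneg_right (frob_mul_mul_le_of_spec_le_one hL hR X) (frob_nonneg _)

end PartialProducts

theorem stmt9 {d : ℕ} (n D : ℕ) (Q δ : ℕ → Matrix (Fin d) (Fin d) ℝ)
    (ε : ℝ) (hε : 0 ≤ ε)
    (hiso : ∀ j, j < n - 1 → spec (Q j) = 1 ∧ frob (Q j) ≤ Real.sqrt D)
    (hC : frob (prodRange Q 0 n) = frob (Q (n - 1)))
    (hδ : ∀ j < n, frob (δ j) ≤ ε * frob (Q j)) :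
    frob (∑ j ∈ Finset.range n,
        prodRange Q 0 j * δ j * prodRange Q (j + 1) (n - (j + 1))) ≤
      ε * (1 + (n - 1 : ℕ) * Real.sqrt D) * frob (prodRange Q 0 n) := by
  obtain _ | m := n
  · simpa [frob] using mul_nonneg hε (Real.sqrt_nonneg _)
  set F := frob (prodRange Q 0 (m + 1))
  have hF : frob (Q m) = F := by simp [F, hC]
  have hspec : ∀ i < m, spec (Q i) ≤ 1 := fun i hi => (hiso i (by omega)).1.le
  have hinner : ∀ j ∈ Finset.range m, frob (prodRange Q 0 j * δ j *
      prodRange Q (j + 1) (m + 1 - (j + 1))) ≤ ε * √D * F := by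
    intro j hj
    have hj : j < m := Finset.mem_range.mp hj
    rw [Nat.add_sub_add_right, ← hF]
    refine (frob_prodRange_mul_le hspec hj _).trans (mul_le_mul_of_nonneg_right ?_ (frob_nonneg _))
    exact (hδ j (by omega)).trans (mul_le_mul_of_nonneg_left (hiso j (by omega)).2 hε)
  have hlast : frob (prodRange Q 0 m * δ m * prodRange Q (m + 1) (m + 1 - (m + 1))) ≤ ε * F := by
    rw [Nat.sub_self, ← hF]
    exact (frob_prodRange_mul_last_le hspec _).trans (hδ m (by omega))
  calc _ ≤ ∑ j ∈ Finset.range (m + 1),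
        frob (prodRange Q 0 j * δ j * prodRange Q (j + 1) (m + 1 - (j + 1))) := frob_sum_le _ _
    _ ≤ ∑ _j ∈ Finset.range m, ε * √D * F + ε * F := by
        rw [Finset.sum_range_succ]; exact add_le_add (Finset.sum_le_sum hinner) hlast
    _ = _ := by simp only [Finset.sum_const, Finset.card_range, nsmul_eq_mul, Nat.add_sub_cancel]; ring
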